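/- Let {w₀, w₁} ⊆ C satisfy h(w₀,w₀) = h(w₁,w₁) = 0 and h(w₀,w₁) = 1, and let Λ₂ = O_F·π⁻¹w₀ + O_F·w₁ (a vertex lattice of type 2). Then the vertex lattices of type 2 adjacent to Λ₂ are exactly Λ_∞ = O_F·π⁻²w₀ + O_F·πw₁ together with Λ_k = O_F·w₀ + O_F·π⁻¹(kπ⁻¹w₀ + w₁) for k running over a fixed set of representatives of O_{F₀}/(π₀); in particular, Λ₂ has exactly q+1 adjacent type-2 vertex lattices. -/

import Mathlib

noncomputable section

attribute [local instance] Classical.propDecidable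

variable {F : Type} [Field F]

/-- Membership in the valuation ring `O_F = {x : F | x = 0 ∨ v x ≥ 0}`. -/
def inO (v : F → ℤ) (x : F) : Prop := x = 0 ∨ 0 ≤ v x

/-- The Hermitian form `h(x, y) = x₁ · σ(y₂) + x₂ · σ(y₁)` on `C = F²`. -/
def herm (σ : F →+* F) (x y : F × F) : F := x.1 * σ y.2 + x.2 * σ y.1

/-- The `O_F`-span of two vectors of `C = F²`. -/
def spanL (v : F → ℤ) (u w : F × F) : Set (F × F) :=
  {x | ∃ a b : F, inO v a ∧ inO v b ∧ x = a • u + b • w}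

/-- An `O_F`-lattice in `C`: a free rank-2 `O_F`-submodule spanning `C` over `F`. -/
def IsLattice (v : F → ℤ) (Λ : Set (F × F)) : Prop :=
  ∃ u w : F × F, LinearIndependent F ![u, w] ∧ Λ = spanL v u w

/-- The dual lattice `Λ^♯ = {x ∈ C | h(x, Λ) ⊆ O_F}`. -/
def dualL (σ : F →+* F) (v : F → ℤ) (Λ : Set (F × F)) : Set (F × F) :=
  {x | ∀ y ∈ Λ, inO v (herm σ x y)}

/-- A vertex lattice of type 0: a self-dual lattice. -/
def IsVertex0 (σ : F →+* F) (v : F → ℤ) (Λ : Set (F × F)) : Prop :=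
  IsLattice v Λ ∧ dualL σ v Λ = Λ

/-- A vertex lattice of type 2: a lattice with `Λ^♯ = π Λ`
(equivalently `πΛ ⊆ Λ^♯ ⊆ Λ` with `Λ/Λ^♯` two-dimensional over the residue field). -/
def IsVertex2 (σ : F →+* F) (π : F) (v : F → ℤ) (Λ : Set (F × F)) : Prop :=
  IsLattice v Λ ∧ dualL σ v Λ = (fun x => π • x) '' Λ

/-- A vertex lattice (of type 0 or type 2). -/
def IsVertex (σ : F →+* F) (π : F) (v : F → ℤ) (Λ : Set (F × F)) : Prop :=
  IsVertex0 σ v Λ ∨ IsVertex2 σ π v Λ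

/-- `nIs π b Λ n` says that `n = n(b, Λ)` is the largest integer `m` with `π⁻ᵐ b ∈ Λ`. -/
def nIs (π : F) (b : F × F) (Λ : Set (F × F)) (n : ℤ) : Prop :=
  IsGreatest {m : ℤ | (π ^ (-m)) • b ∈ Λ} n

/-- Adjacency of type-2 vertex lattices: distinct, with intersection a type-0 vertex lattice. -/
def AdjV (σ : F →+* F) (π : F) (v : F → ℤ) (Λ Λ' : Set (F × F)) : Prop :=
  IsVertex2 σ π v Λ ∧ IsVertex2 σ π v Λ' ∧ Λ ≠ Λ' ∧ IsVertex0 σ v (Λ ∩ Λ')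

/-- There is a walk of length `k` between `Λ` and `Λ'` in the Bruhat–Tits tree. -/
def WalkN (σ : F →+* F) (π : F) (v : F → ℤ) (k : ℕ) (Λ Λ' : Set (F × F)) : Prop :=
  ∃ f : ℕ → Set (F × F), f 0 = Λ ∧ f k = Λ' ∧ ∀ i < k, AdjV σ π v (f i) (f (i + 1))

/-- `dGIs σ π v Λ Λ' k` : the graph distance `d_G(Λ, Λ')` equals `k`. -/
def dGIs (σ : F →+* F) (π : F) (v : F → ℤ) (Λ Λ' : Set (F × F)) (k : ℕ) : Prop :=
  IsLeast {j : ℕ | WalkN σ π v j Λ Λ'} k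

/-- `P` is a type-2 "hull" of the vertex lattice `Λ`: `P = Λ` when `Λ` has type 2,
and `P` is a type-2 vertex lattice containing `Λ` when `Λ` has type 0. -/
def HullOf (σ : F →+* F) (π : F) (v : F → ℤ) (Λ P : Set (F × F)) : Prop :=
  (IsVertex2 σ π v Λ ∧ P = Λ) ∨ (IsVertex0 σ v Λ ∧ IsVertex2 σ π v P ∧ Λ ⊆ P)

/-- `DTwice σ π v Λ Λ' m` : twice the tree distance `D(Λ, Λ')` equals `m`
(type-0 vertex lattices are midpoints of edges, contributing `1/2` each). -/
def DTwice (σ : F →+* F) (π : F) (v : F → ℤ) (Λ Λ' : Set (F × F)) (m : ℕ) : Prop :=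
  (Λ = Λ' ∧ m = 0) ∨
  (Λ ≠ Λ' ∧ ∃ k : ℕ,
    IsLeast {j : ℕ | ∃ P Q, HullOf σ π v Λ P ∧ HullOf σ π v Λ' Q ∧ WalkN σ π v j P Q} k ∧
    (m : ℤ) = 2 * k + (if IsVertex0 σ v Λ then 1 else 0) +
      (if IsVertex0 σ v Λ' then 1 else 0))

/-- `g ∈ GL₂(O_F)`. -/
def InGL2O (v : F → ℤ) (g : Matrix (Fin 2) (Fin 2) F) : Prop :=
  (∀ i j, inO v (g i j)) ∧
    ∃ g' : Matrix (Fin 2) (Fin 2) F, (∀ i j, inO v (g' i j)) ∧ g * g' = 1 ∧ g' * g = 1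

/-- Equivalence of Hermitian matrices: `T ≈ T'` iff `gᵗ T ḡ = T'` for some `g ∈ GL₂(O_F)`. -/
def HermEquiv (σ : F →+* F) (v : F → ℤ) (T T' : Matrix (Fin 2) (Fin 2) F) : Prop :=
  ∃ g, InGL2O v g ∧ g.transpose * T * g.map (fun x => σ x) = T'

/-- `u` is a unit of `O_{F₀}`. -/
def IsUnitO₀ (σ : F →+* F) (v : F → ℤ) (u : F) : Prop :=
  σ u = u ∧ u ≠ 0 ∧ v u = 0

/-- `x` is a norm from `F^×`. -/
def IsNorm (σ : F →+* F) (x : F) : Prop := ∃ y : F, y ≠ 0 ∧ x = y * σ y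


section AuxDev

variable {F : Type} [Field F]

lemma inO_congr {v : F → ℤ} {x y : F} (h : x = y) : inO v x ↔ inO v y := by rw [h]

lemma dual_anti (σ : F →+* F) (v : F → ℤ) {A B : Set (F × F)} (h : A ⊆ B) :
    dualL σ v B ⊆ dualL σ v A := fun x hx y hy => hx y (h hy)

lemma herm_add_left (σ : F →+* F) (x y z : F × F) :
    herm σ (x + y) z = herm σ x z + herm σ y z := by
  simp only [herm, Prod.fst_add, Prod.snd_add]; ring

lemma herm_smul_left (σ : F →+* F) (a : F) (x y : F × F) :
    herm σ (a • x) y = a * herm σ x y := by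
  simp only [herm, Prod.smul_fst, Prod.smul_snd, smul_eq_mul]; ring

lemma herm_add_right (σ : F →+* F) (x y z : F × F) :
    herm σ x (y + z) = herm σ x y + herm σ x z := by
  simp only [herm, Prod.fst_add, Prod.snd_add, map_add]; ring

lemma herm_smul_right (σ : F →+* F) (a : F) (x y : F × F) :
    herm σ x (a • y) = σ a * herm σ x y := by
  simp only [herm, Prod.smul_fst, Prod.smul_snd, smul_eq_mul, map_mul]; ring

lemma smul_image_span (v : F → ℤ) (c : F) (u w : F × F) :
    (fun x => c • x) '' spanL v u w = spanL v (c • u) (c • w) := by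
  ext x
  constructor
  · rintro ⟨y, ⟨a, b, ha, hb, rfl⟩, rfl⟩
    exact ⟨a, b, ha, hb, by module⟩
  · rintro ⟨a, b, ha, hb, rfl⟩
    exact ⟨a • u + b • w, ⟨a, b, ha, hb, rfl⟩, by module⟩

/-- Bundled hypotheses. -/
structure VSetup (F : Type) [Field F] where
  σ : F →+* F
  π : F
  v : F → ℤ
  w₀ : F × F
  w₁ : F × F
  hinv : ∀ x, σ (σ x) = x
  hσπ : σ π = -π
  hπ : π ≠ 0
  h2 : (2 : F) ≠ 0
  hvπ : v π = 1
  hv2 : v (2 : F) = 0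
  hvσ : ∀ x, v (σ x) = v x
  hvmul : ∀ x y : F, x ≠ 0 → y ≠ 0 → v (x * y) = v x + v y
  hvadd : ∀ x y : F, x ≠ 0 → y ≠ 0 → x + y ≠ 0 → min (v x) (v y) ≤ v (x + y)
  heven : ∀ x : F, σ x = x → x ≠ 0 → Even (v x)
  hind : LinearIndependent F ![w₀, w₁]
  h00 : herm σ w₀ w₀ = 0
  h11 : herm σ w₁ w₁ = 0
  h01 : herm σ w₀ w₁ = 1

namespace VSetup

variable {F : Type} [Field F] (S : VSetup F)

lemma v_one : S.v 1 = 0 := by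
  have h := S.hvmul 1 1 one_ne_zero one_ne_zero
  rw [one_mul] at h; omega

lemma v_neg (x : F) : S.v (-x) = S.v x := by
  rcases eq_or_ne x 0 with rfl | hx
  · rw [neg_zero]
  have hm1 : S.v (-1 : F) = 0 := by
    have h := S.hvmul (-1) (-1) (by norm_num) (by norm_num)
    rw [neg_mul_neg, one_mul, S.v_one] at h; omega
  have h := S.hvmul (-1) x (by norm_num) hx
  rw [neg_one_mul] at h; rw [h, hm1]; omega

lemma v_inv (x : F) (hx : x ≠ 0) : S.v x⁻¹ = -S.v x := by
  have h := S.hvmul x x⁻¹ hx (inv_ne_zero hx)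
  rw [mul_inv_cancel₀ hx, S.v_one] at h; omega

lemma inO_zero : inO S.v 0 := Or.inl rfl
lemma inO_one : inO S.v 1 := Or.inr (le_of_eq S.v_one.symm)
lemma inO_pi : inO S.v S.π := Or.inr (by rw [S.hvπ]; norm_num)

lemma inO_mul {x y : F} (hx : inO S.v x) (hy : inO S.v y) : inO S.v (x * y) := by
  rcases eq_or_ne x 0 with rfl | hx0
  · exact Or.inl (zero_mul y)
  rcases eq_or_ne y 0 with rfl | hy0
  · exact Or.inl (mul_zero x)
  have hx' := hx.resolve_left hx0
  have hy' := hy.resolve_left hy0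
  right; rw [S.hvmul x y hx0 hy0]; omega

lemma inO_add {x y : F} (hx : inO S.v x) (hy : inO S.v y) : inO S.v (x + y) := by
  rcases eq_or_ne x 0 with rfl | hx0
  · rwa [zero_add]
  rcases eq_or_ne y 0 with rfl | hy0
  · rwa [add_zero]
  rcases eq_or_ne (x + y) 0 with h0 | h0
  · exact Or.inl h0
  have hx' := hx.resolve_left hx0
  have hy' := hy.resolve_left hy0
  have h := S.hvadd x y hx0 hy0 h0
  right; omega

lemma inO_neg {x : F} (hx : inO S.v x) : inO S.v (-x) := by
  rcases hx with rfl | hx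
  · exact Or.inl neg_zero
  · exact Or.inr (by rwa [S.v_neg])

lemma inO_neg_iff {x : F} : inO S.v (-x) ↔ inO S.v x :=
  ⟨fun h => by have := S.inO_neg h; rwa [neg_neg] at this, S.inO_neg⟩

lemma inO_sigma {x : F} (hx : inO S.v x) : inO S.v (S.σ x) := by
  rcases hx with rfl | hx
  · exact Or.inl (map_zero _)
  · exact Or.inr (by rwa [S.hvσ])

lemma inO_sigma_iff {x : F} : inO S.v (S.σ x) ↔ inO S.v x :=
  ⟨fun h => by have := S.inO_sigma h; rwa [S.hinv] at this, S.inO_sigma⟩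

lemma vpp : S.v (S.π * S.π) = 2 := by
  rw [S.hvmul _ _ S.hπ S.hπ, S.hvπ]; norm_num

lemma not_inO_pinv : ¬ inO S.v S.π⁻¹ := by
  rintro (h | h)
  · exact inv_ne_zero S.hπ h
  · rw [S.v_inv _ S.hπ, S.hvπ] at h; omega

lemma not_inO_ppinv : ¬ inO S.v (S.π * S.π)⁻¹ := by
  rintro (h | h)
  · exact inv_ne_zero (mul_ne_zero S.hπ S.hπ) h
  · rw [S.v_inv _ (mul_ne_zero S.hπ S.hπ), S.vpp] at h; omega

lemma inO_two_inv : inO S.v (2 : F)⁻¹ := by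
  right; rw [S.v_inv _ S.h2, S.hv2]; norm_num

lemma σ_pinv : S.σ S.π⁻¹ = -S.π⁻¹ := by rw [map_inv₀, S.hσπ, inv_neg]

lemma σ_ppinv : S.σ (S.π * S.π)⁻¹ = (S.π * S.π)⁻¹ := by
  rw [map_inv₀, map_mul, S.hσπ, neg_mul_neg]

lemma anti_inO {x : F} (hanti : S.σ x = -x) (hx : inO S.v x) : inO S.v (x * S.π⁻¹) := by
  rcases eq_or_ne x 0 with rfl | h0
  · exact Or.inl (zero_mul _)
  have hy0 : x * S.π⁻¹ ≠ 0 := mul_ne_zero h0 (inv_ne_zero S.hπ)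
  have hfix : S.σ (x * S.π⁻¹) = x * S.π⁻¹ := by
    rw [map_mul, S.σ_pinv, hanti]; ring
  have hev := S.heven _ hfix hy0
  have hv : S.v (x * S.π⁻¹) = S.v x - 1 := by
    rw [S.hvmul _ _ h0 (inv_ne_zero S.hπ), S.v_inv _ S.hπ, S.hvπ]; ring
  have hx' := hx.resolve_left h0
  right; rw [hv]; rw [hv] at hev
  obtain ⟨t, ht⟩ := hev; omega

lemma half {c : F} (hc : inO S.v c) (h1 : inO S.v ((c + S.σ c) * S.π⁻¹)) :
    inO S.v (c * S.π⁻¹) := by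
  have hanti : S.σ (c - S.σ c) = -(c - S.σ c) := by rw [map_sub, S.hinv]; ring
  have hsub : inO S.v (c - S.σ c) := by
    have := S.inO_add hc (S.inO_neg (S.inO_sigma hc))
    rwa [← sub_eq_add_neg] at this
  have h2' := S.anti_inO hanti hsub
  have h3 : inO S.v ((2 : F) * (c * S.π⁻¹)) := by
    have := S.inO_add h1 h2'
    exact (inO_congr (by ring)).mp this
  have h4 := S.inO_mul S.inO_two_inv h3
  exact (inO_congr (by rw [← mul_assoc, inv_mul_cancel₀ S.h2, one_mul])).mp h4

lemma herm_swap (x y : F × F) : herm S.σ y x = S.σ (herm S.σ x y) := by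
  simp only [herm, map_add, map_mul, S.hinv]; ring

def Ac (x : F × F) : F := herm S.σ x S.w₁
def Bc (x : F × F) : F := herm S.σ x S.w₀

lemma herm_w1w0 : herm S.σ S.w₁ S.w₀ = 1 := by rw [S.herm_swap, S.h01, map_one]

@[simp] lemma Ac_w0 : S.Ac S.w₀ = 1 := S.h01
@[simp] lemma Ac_w1 : S.Ac S.w₁ = 0 := S.h11
@[simp] lemma Bc_w0 : S.Bc S.w₀ = 0 := S.h00
@[simp] lemma Bc_w1 : S.Bc S.w₁ = 1 := S.herm_w1w0

@[simp] lemma Ac_add (x y : F × F) : S.Ac (x + y) = S.Ac x + S.Ac y := herm_add_left ..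
@[simp] lemma Ac_smul (a : F) (x : F × F) : S.Ac (a • x) = a * S.Ac x := herm_smul_left ..
@[simp] lemma Bc_add (x y : F × F) : S.Bc (x + y) = S.Bc x + S.Bc y := herm_add_left ..
@[simp] lemma Bc_smul (a : F) (x : F × F) : S.Bc (a • x) = a * S.Bc x := herm_smul_left ..

lemma span_repr (x : F × F) : ∃ a b : F, x = a • S.w₀ + b • S.w₁ := by
  have hs : Submodule.span F (Set.range ![S.w₀, S.w₁]) = ⊤ := by
    apply LinearIndependent.span_eq_top_of_card_eq_finrank S.hind
    simp
  have hx : x ∈ Submodule.span F ({S.w₀, S.w₁} : Set (F × F)) := by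
    rw [show ({S.w₀, S.w₁} : Set (F × F)) = Set.range ![S.w₀, S.w₁] by
      simp [Matrix.range_cons, Matrix.range_empty, Set.pair_comm]]
    rw [hs]; trivial
  rw [Submodule.mem_span_pair] at hx
  obtain ⟨a, b, hab⟩ := hx
  exact ⟨a, b, hab.symm⟩

lemma reprc (x : F × F) : x = S.Ac x • S.w₀ + S.Bc x • S.w₁ := by
  obtain ⟨a, b, rfl⟩ := S.span_repr x
  rw [show S.Ac (a • S.w₀ + b • S.w₁) = a by simp,
     show S.Bc (a • S.w₀ + b • S.w₁) = b by simp]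

lemma ext_c {x y : F × F} (h1 : S.Ac x = S.Ac y) (h2 : S.Bc x = S.Bc y) : x = y := by
  have hx := S.reprc x
  rw [h1, h2, ← S.reprc y] at hx
  exact hx

lemma herm_gen (a b c d : F) :
    herm S.σ (a • S.w₀ + b • S.w₁) (c • S.w₀ + d • S.w₁) = a * S.σ d + b * S.σ c := by
  simp only [herm_add_left, herm_add_right, herm_smul_left, herm_smul_right,
    S.h00, S.h11, S.h01, S.herm_w1w0]
  ring

lemma herm_c (x y : F × F) :
    herm S.σ x y = S.Ac x * S.σ (S.Bc y) + S.Bc x * S.σ (S.Ac y) := by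
  conv_lhs => rw [S.reprc x, S.reprc y]
  rw [S.herm_gen]

lemma mem_span_left (u w : F × F) : u ∈ spanL S.v u w :=
  ⟨1, 0, S.inO_one, S.inO_zero, by simp⟩

lemma mem_span_right (u w : F × F) : w ∈ spanL S.v u w :=
  ⟨0, 1, S.inO_zero, S.inO_one, by simp⟩

lemma span_smul {u w x : F × F} {c : F} (hc : inO S.v c) (hx : x ∈ spanL S.v u w) :
    c • x ∈ spanL S.v u w := by
  obtain ⟨a, b, ha, hb, rfl⟩ := hx
  exact ⟨c * a, c * b, S.inO_mul hc ha, S.inO_mul hc hb, by module⟩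

lemma span_add {u w x y : F × F} (hx : x ∈ spanL S.v u w) (hy : y ∈ spanL S.v u w) :
    x + y ∈ spanL S.v u w := by
  obtain ⟨a, b, ha, hb, rfl⟩ := hx
  obtain ⟨a', b', ha', hb', rfl⟩ := hy
  exact ⟨a + a', b + b', S.inO_add ha ha', S.inO_add hb hb', by module⟩

lemma mem_tri {α γ δ : F} (hα : α ≠ 0) (hδ : δ ≠ 0) {u w : F × F}
    (hu : u = α • S.w₀) (hw : w = γ • S.w₀ + δ • S.w₁) (x : F × F) :
    x ∈ spanL S.v u w ↔
      inO S.v (α⁻¹ * (S.Ac x - γ * (δ⁻¹ * S.Bc x))) ∧ inO S.v (δ⁻¹ * S.Bc x) := by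
  subst hu hw
  constructor
  · rintro ⟨a, b, ha, hb, rfl⟩
    have hA : S.Ac (a • (α • S.w₀) + b • (γ • S.w₀ + δ • S.w₁)) = a * α + b * γ := by
      simp only [Ac_add, Ac_smul, Ac_w0, Ac_w1]; ring
    have hB : S.Bc (a • (α • S.w₀) + b • (γ • S.w₀ + δ • S.w₁)) = b * δ := by
      simp only [Bc_add, Bc_smul, Bc_w0, Bc_w1]; ring
    rw [hA, hB]
    constructor
    · exact (inO_congr (by field_simp; ring)).mpr ha
    · exact (inO_congr (by field_simp)).mpr hb
  · rintro ⟨h1, h2⟩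
    refine ⟨_, _, h1, h2, ?_⟩
    apply S.ext_c
    · simp only [Ac_add, Ac_smul, Ac_w0, Ac_w1]
      field_simp
      ring
    · simp only [Bc_add, Bc_smul, Bc_w0, Bc_w1]
      field_simp
      ring

lemma mem_dual (u w : F × F) (x : F × F) :
    x ∈ dualL S.σ S.v (spanL S.v u w) ↔
      inO S.v (herm S.σ x u) ∧ inO S.v (herm S.σ x w) := by
  constructor
  · intro h
    exact ⟨h u (S.mem_span_left u w), h w (S.mem_span_right u w)⟩
  · rintro ⟨h1, h2⟩ y ⟨a, b, ha, hb, rfl⟩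
    rw [herm_add_right, herm_smul_right, herm_smul_right]
    exact S.inO_add (S.inO_mul (S.inO_sigma ha) h1) (S.inO_mul (S.inO_sigma hb) h2)

lemma dual_tri {α γ δ : F} {u w : F × F}
    (hu : u = α • S.w₀) (hw : w = γ • S.w₀ + δ • S.w₁) (x : F × F) :
    x ∈ dualL S.σ S.v (spanL S.v u w) ↔
      inO S.v (S.σ α * S.Bc x) ∧ inO S.v (S.σ γ * S.Bc x + S.σ δ * S.Ac x) := by
  subst hu hw
  rw [S.mem_dual]
  have e1 : herm S.σ x (α • S.w₀) = S.σ α * S.Bc x := by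
    rw [herm_smul_right]; rfl
  have e2 : herm S.σ x (γ • S.w₀ + δ • S.w₁) = S.σ γ * S.Bc x + S.σ δ * S.Ac x := by
    rw [herm_add_right, herm_smul_right, herm_smul_right]; rfl
  rw [e1, e2]

lemma li_tri {α γ δ : F} (hα : α ≠ 0) (hδ : δ ≠ 0) :
    LinearIndependent F ![α • S.w₀, γ • S.w₀ + δ • S.w₁] := by
  rw [LinearIndependent.pair_iff]
  intro s t hst
  have h := (LinearIndependent.pair_iff.mp S.hind) (s * α + t * γ) (t * δ)
    (by rw [← hst]; module)
  have ht : t = 0 := by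
    rcases mul_eq_zero.mp h.2 with h' | h'
    · exact h'
    · exact absurd h' hδ
  subst ht
  have hs : s = 0 := by
    have := h.1
    rw [mul_comm, zero_mul, add_zero] at this
    rcases mul_eq_zero.mp this with h' | h'
    · exact absurd h' hα
    · exact h'
  exact ⟨hs, rfl⟩

/-! Named lattices -/

def L2 : Set (F × F) := spanL S.v (S.π⁻¹ • S.w₀) S.w₁
def Linf : Set (F × F) := spanL S.v ((S.π * S.π)⁻¹ • S.w₀) (S.π • S.w₁)
def Lk (k : F) : Set (F × F) := spanL S.v S.w₀ (S.π⁻¹ • ((k * S.π⁻¹) • S.w₀ + S.w₁))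
def M0 : Set (F × F) := spanL S.v (S.π⁻¹ • S.w₀) (S.π • S.w₁)
def Mk (k : F) : Set (F × F) := spanL S.v S.w₀ ((k * S.π⁻¹) • S.w₀ + S.w₁)

lemma w1_tri : S.w₁ = (0 : F) • S.w₀ + (1 : F) • S.w₁ := by simp
lemma pw1_tri : S.π • S.w₁ = (0 : F) • S.w₀ + S.π • S.w₁ := by simp
lemma w0_tri : S.w₀ = (1 : F) • S.w₀ := (one_smul F S.w₀).symm
lemma gk_tri (k : F) :
    S.π⁻¹ • ((k * S.π⁻¹) • S.w₀ + S.w₁) = (S.π⁻¹ * (k * S.π⁻¹)) • S.w₀ + S.π⁻¹ • S.w₁ := by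
  rw [smul_add, smul_smul]
lemma mk_tri (k : F) :
    (k * S.π⁻¹) • S.w₀ + S.w₁ = (k * S.π⁻¹) • S.w₀ + (1 : F) • S.w₁ := by rw [one_smul]

lemma memL2 (x : F × F) :
    x ∈ S.L2 ↔ inO S.v (S.π * S.Ac x) ∧ inO S.v (S.Bc x) := by
  rw [VSetup.L2, S.mem_tri (inv_ne_zero S.hπ) one_ne_zero rfl S.w1_tri]
  exact and_congr (inO_congr (by rw [inv_inv]; ring)) (inO_congr (by rw [inv_one, one_mul]))

lemma memLinf (x : F × F) :
    x ∈ S.Linf ↔ inO S.v (S.π * (S.π * S.Ac x)) ∧ inO S.v (S.π⁻¹ * S.Bc x) := by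
  rw [VSetup.Linf, S.mem_tri (inv_ne_zero (mul_ne_zero S.hπ S.hπ)) S.hπ rfl S.pw1_tri]
  exact and_congr (inO_congr (by rw [inv_inv]; ring)) (inO_congr (by ring))

lemma memLk (k : F) (x : F × F) :
    x ∈ S.Lk k ↔ inO S.v (S.Ac x - k * S.π⁻¹ * S.Bc x) ∧ inO S.v (S.π * S.Bc x) := by
  rw [VSetup.Lk, S.mem_tri one_ne_zero (inv_ne_zero S.hπ) S.w0_tri (S.gk_tri k)]
  refine and_congr (inO_congr ?_) (inO_congr (by rw [inv_inv]))
  rw [inv_one, one_mul, inv_inv]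
  linear_combination (-(k * S.π⁻¹ * S.Bc x)) * inv_mul_cancel₀ S.hπ

lemma memM0 (x : F × F) :
    x ∈ S.M0 ↔ inO S.v (S.π * S.Ac x) ∧ inO S.v (S.π⁻¹ * S.Bc x) := by
  rw [VSetup.M0, S.mem_tri (inv_ne_zero S.hπ) S.hπ rfl S.pw1_tri]
  exact and_congr (inO_congr (by rw [inv_inv]; ring)) (inO_congr (by ring))

lemma memMk (k : F) (x : F × F) :
    x ∈ S.Mk k ↔ inO S.v (S.Ac x - k * S.π⁻¹ * S.Bc x) ∧ inO S.v (S.Bc x) := by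
  rw [VSetup.Mk, S.mem_tri one_ne_zero one_ne_zero S.w0_tri (S.mk_tri k)]
  refine and_congr (inO_congr ?_) (inO_congr (by rw [inv_one, one_mul]))
  rw [inv_one]; ring

end VSetup
end AuxDev

namespace VSetup

variable {F : Type} [Field F] (S : VSetup F)

lemma lattice_Linf : IsLattice S.v S.Linf := by
  refine ⟨_, _, ?_, rfl⟩
  have h := S.li_tri (γ := 0) (inv_ne_zero (mul_ne_zero S.hπ S.hπ)) S.hπ
  rwa [← S.pw1_tri] at h

lemma lattice_Lk (k : F) : IsLattice S.v (S.Lk k) := by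
  refine ⟨_, _, ?_, rfl⟩
  have h := S.li_tri (γ := S.π⁻¹ * (k * S.π⁻¹)) one_ne_zero (inv_ne_zero S.hπ)
  rwa [← S.gk_tri, one_smul] at h

lemma lattice_M0 : IsLattice S.v S.M0 := by
  refine ⟨_, _, ?_, rfl⟩
  have h := S.li_tri (γ := 0) (inv_ne_zero S.hπ) S.hπ
  rwa [← S.pw1_tri] at h

lemma lattice_Mk (k : F) : IsLattice S.v (S.Mk k) := by
  refine ⟨_, _, ?_, rfl⟩
  have h := S.li_tri (γ := k * S.π⁻¹) one_ne_zero one_ne_zero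
  rwa [← S.mk_tri, one_smul] at h

lemma vertex2_Linf : IsVertex2 S.σ S.π S.v S.Linf := by
  refine ⟨S.lattice_Linf, ?_⟩
  have himg : (fun x => S.π • x) '' S.Linf
      = spanL S.v ((S.π * (S.π * S.π)⁻¹) • S.w₀) ((0 : F) • S.w₀ + (S.π * S.π) • S.w₁) := by
    rw [VSetup.Linf, smul_image_span, smul_smul, smul_smul]
    congr 1
    rw [zero_smul, zero_add]
  have hne : S.π * (S.π * S.π)⁻¹ ≠ 0 := mul_ne_zero S.hπ (inv_ne_zero (mul_ne_zero S.hπ S.hπ))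
  ext x
  rw [himg, VSetup.Linf, S.dual_tri (γ := 0) rfl S.pw1_tri x,
    S.mem_tri hne (mul_ne_zero S.hπ S.hπ) rfl rfl x]
  rw [S.σ_ppinv, map_zero, S.hσπ]
  constructor
  · rintro ⟨h1, h2⟩
    refine ⟨?_, (inO_congr (by ring)).mp h1⟩
    have h3 := S.inO_neg h2
    refine (inO_congr ?_).mp h3
    field_simp
    ring
  · rintro ⟨h1, h2⟩
    constructor
    · exact (inO_congr (by ring)).mp h2
    · have h3 := S.inO_neg h1
      refine (inO_congr ?_).mp h3
      field_simp
      ring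

lemma vertex2_Lk (k : F) (hkσ : S.σ k = k) : IsVertex2 S.σ S.π S.v (S.Lk k) := by
  refine ⟨S.lattice_Lk k, ?_⟩
  have himg : (fun x => S.π • x) '' S.Lk k
      = spanL S.v (S.π • S.w₀) ((k * S.π⁻¹) • S.w₀ + (1 : F) • S.w₁) := by
    rw [VSetup.Lk, smul_image_span, smul_smul, mul_inv_cancel₀ S.hπ, one_smul, one_smul]
  ext x
  rw [himg, VSetup.Lk, S.dual_tri (γ := S.π⁻¹ * (k * S.π⁻¹)) S.w0_tri (S.gk_tri k) x,
    S.mem_tri S.hπ one_ne_zero rfl rfl x]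
  rw [map_one, one_mul, S.σ_pinv, inv_one,
    show S.σ (S.π⁻¹ * (k * S.π⁻¹)) = S.π⁻¹ * (k * S.π⁻¹) by
      rw [map_mul, map_mul, S.σ_pinv, hkσ]; ring]
  constructor
  · rintro ⟨h1, h2⟩
    refine ⟨?_, (inO_congr (by ring)).mp h1⟩
    have h3 := S.inO_neg h2
    exact (inO_congr (by ring)).mp h3
  · rintro ⟨h1, h2⟩
    refine ⟨(inO_congr (by ring)).mp h2, ?_⟩
    have h3 := S.inO_neg h1
    exact (inO_congr (by ring)).mp h3

lemma vertex0_M0 : IsVertex0 S.σ S.v S.M0 := by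
  refine ⟨S.lattice_M0, ?_⟩
  ext x
  rw [VSetup.M0, S.dual_tri (γ := 0) rfl S.pw1_tri x, ← VSetup.M0, S.memM0,
    map_zero, S.σ_pinv, S.hσπ]
  constructor
  · rintro ⟨h1, h2⟩
    exact ⟨(inO_congr (by ring)).mp (S.inO_neg h2), (inO_congr (by ring)).mp (S.inO_neg h1)⟩
  · rintro ⟨h1, h2⟩
    exact ⟨(inO_congr (by ring)).mp (S.inO_neg h2), (inO_congr (by ring)).mp (S.inO_neg h1)⟩

lemma vertex0_Mk (k : F) (hkσ : S.σ k = k) : IsVertex0 S.σ S.v (S.Mk k) := by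
  refine ⟨S.lattice_Mk k, ?_⟩
  ext x
  rw [VSetup.Mk, S.dual_tri (γ := k * S.π⁻¹) S.w0_tri (S.mk_tri k) x, ← VSetup.Mk, S.memMk,
    map_one, one_mul, one_mul,
    show S.σ (k * S.π⁻¹) = -(k * S.π⁻¹) by rw [map_mul, S.σ_pinv, hkσ]; ring]
  constructor
  · rintro ⟨h1, h2⟩
    exact ⟨(inO_congr (by ring)).mp h2, h1⟩
  · rintro ⟨h1, h2⟩
    exact ⟨h2, (inO_congr (by ring)).mp h1⟩

lemma inter_Linf : S.L2 ∩ S.Linf = S.M0 := by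
  ext x
  rw [Set.mem_inter_iff, S.memL2, S.memLinf, S.memM0]
  constructor
  · rintro ⟨⟨h1, _⟩, ⟨_, h4⟩⟩
    exact ⟨h1, h4⟩
  · rintro ⟨h1, h2⟩
    refine ⟨⟨h1, ?_⟩, ⟨S.inO_mul S.inO_pi h1, h2⟩⟩
    have h3 := S.inO_mul S.inO_pi h2
    exact (inO_congr (by rw [← mul_assoc, mul_inv_cancel₀ S.hπ, one_mul])).mp h3

lemma inter_Lk (k : F) (hkO : inO S.v k) : S.L2 ∩ S.Lk k = S.Mk k := by
  ext x
  rw [Set.mem_inter_iff, S.memL2, S.memLk, S.memMk]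
  constructor
  · rintro ⟨⟨_, h2⟩, ⟨h3, _⟩⟩
    exact ⟨h3, h2⟩
  · rintro ⟨h1, h2⟩
    refine ⟨⟨?_, h2⟩, ⟨h1, S.inO_mul S.inO_pi h2⟩⟩
    have h3 := S.inO_add (S.inO_mul S.inO_pi h1) (S.inO_mul hkO h2)
    refine (inO_congr ?_).mp h3
    linear_combination (-(k * S.Bc x)) * mul_inv_cancel₀ S.hπ

lemma einf_mem : ((S.π * S.π)⁻¹) • S.w₀ ∈ S.Linf := S.mem_span_left _ _

lemma Ac_einf : S.Ac (((S.π * S.π)⁻¹) • S.w₀) = (S.π * S.π)⁻¹ := by simp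
lemma Bc_einf : S.Bc (((S.π * S.π)⁻¹) • S.w₀) = 0 := by simp

lemma gk_mem (k : F) : S.π⁻¹ • ((k * S.π⁻¹) • S.w₀ + S.w₁) ∈ S.Lk k := S.mem_span_right _ _

lemma Ac_gk (k : F) : S.Ac (S.π⁻¹ • ((k * S.π⁻¹) • S.w₀ + S.w₁)) = S.π⁻¹ * (k * S.π⁻¹) := by
  simp

lemma Bc_gk (k : F) : S.Bc (S.π⁻¹ • ((k * S.π⁻¹) • S.w₀ + S.w₁)) = S.π⁻¹ := by
  simp

lemma L2_ne_Linf : S.L2 ≠ S.Linf := by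
  intro h
  have hmem : ((S.π * S.π)⁻¹) • S.w₀ ∈ S.L2 := by rw [h]; exact S.einf_mem
  have h1 := ((S.memL2 _).mp hmem).1
  rw [S.Ac_einf] at h1
  exact S.not_inO_pinv ((inO_congr (by
    rw [mul_inv, ← mul_assoc, mul_inv_cancel₀ S.hπ, one_mul])).mp h1)

lemma L2_ne_Lk (k : F) : S.L2 ≠ S.Lk k := by
  intro h
  have hmem : S.π⁻¹ • ((k * S.π⁻¹) • S.w₀ + S.w₁) ∈ S.L2 := by rw [h]; exact S.gk_mem k
  have h1 := ((S.memL2 _).mp hmem).2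
  rw [S.Bc_gk] at h1
  exact S.not_inO_pinv h1

lemma Linf_ne_Lk (k : F) : S.Linf ≠ S.Lk k := by
  intro h
  have hmem : ((S.π * S.π)⁻¹) • S.w₀ ∈ S.Lk k := by rw [← h]; exact S.einf_mem
  have h1 := ((S.memLk k _).mp hmem).1
  rw [S.Ac_einf, S.Bc_einf] at h1
  exact S.not_inO_ppinv ((inO_congr (by ring)).mp h1)

lemma Lk_eq_imp {k k' : F} (h : S.Lk k = S.Lk k') :
    inO S.v ((k - k') * (S.π⁻¹ * S.π⁻¹)) := by
  have hmem : S.π⁻¹ • ((k * S.π⁻¹) • S.w₀ + S.w₁) ∈ S.Lk k' := by rw [← h]; exact S.gk_mem k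
  have h1 := ((S.memLk k' _).mp hmem).1
  rw [S.Ac_gk, S.Bc_gk] at h1
  exact (inO_congr (by ring)).mp h1

end VSetup

namespace VSetup

variable {F : Type} [Field F] (S : VSetup F)

lemma forward {Λ : Set (F × F)} (R : Finset F)
    (hRrep : ∀ x : F, S.σ x = x → inO S.v x →
      ∃! r, r ∈ R ∧ inO S.v ((x - r) / (S.π * S.π)))
    (hadj : AdjV S.σ S.π S.v S.L2 Λ) :
    Λ = S.Linf ∨ ∃ k ∈ R, Λ = S.Lk k := by
  obtain ⟨hV2L2, ⟨⟨u, w, hli, hspan⟩, hdual⟩, hne, ⟨hMlat, hMdual⟩⟩ := hadj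
  subst hspan
  set Λ := spanL S.v u w with hΛdef
  have hπ := S.hπ
  have hL2dual : dualL S.σ S.v S.L2 = (fun x => S.π • x) '' S.L2 := hV2L2.2
  have hMsub2 : S.L2 ∩ Λ ⊆ S.L2 := Set.inter_subset_left
  have hMsubΛ : S.L2 ∩ Λ ⊆ Λ := Set.inter_subset_right
  have hsub1 : (fun x => S.π • x) '' S.L2 ⊆ S.L2 ∩ Λ := by
    rw [← hL2dual, ← hMdual]; exact dual_anti _ _ hMsub2
  have hsub2 : ∀ x ∈ Λ, S.π • x ∈ S.L2 ∩ Λ := by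
    intro x hx
    have h1 : S.π • x ∈ dualL S.σ S.v Λ := by rw [hdual]; exact ⟨x, hx, rfl⟩
    have h2 := dual_anti S.σ S.v hMsubΛ h1
    rwa [hMdual] at h2
  have hw0Λ : S.w₀ ∈ Λ := by
    have h1 : S.π⁻¹ • S.w₀ ∈ S.L2 := S.mem_span_left _ _
    have h2 := hsub1 ⟨_, h1, rfl⟩
    simp only [smul_smul, mul_inv_cancel₀ hπ, one_smul] at h2
    exact h2.2
  have hpw1Λ : S.π • S.w₁ ∈ Λ := (hsub1 ⟨S.w₁, S.mem_span_right _ _, rfl⟩).2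
  have hF3 : ∀ x ∈ Λ, ∀ y ∈ Λ, inO S.v (S.π * herm S.σ x y) := by
    intro x hx y hy
    have h1 : S.π • x ∈ dualL S.σ S.v Λ := by rw [hdual]; exact ⟨x, hx, rfl⟩
    have h2 := h1 y hy
    rwa [herm_smul_left] at h2
  have hF2 : ∀ y ∈ Λ, inO S.v (S.π * (S.π * S.Ac y)) ∧ inO S.v (S.π * S.Bc y) := by
    intro y hy
    have h := (S.memL2 _).mp (hsub2 y hy).1
    rwa [S.Ac_smul, S.Bc_smul] at h
  have hexists : ∃ x ∈ Λ, x ∉ S.L2 := by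
    by_contra hcon
    push_neg at hcon
    have hMeq : S.L2 ∩ Λ = Λ := Set.inter_eq_self_of_subset_right hcon
    rw [hMeq] at hMdual
    have hΛeq : Λ = (fun x => S.π • x) '' Λ := by rw [← hdual, hMdual]
    have hu : u ∈ Λ := S.mem_span_left _ _
    rw [hΛeq] at hu
    obtain ⟨y, hy, hyu⟩ := hu
    obtain ⟨a, b, ha, hb, rfl⟩ := hy
    dsimp only at hyu
    have hkey : (1 - S.π * a) • u + (-(S.π * b)) • w = 0 := by
      have h1 : (1 - S.π * a) • u + (-(S.π * b)) • w = u - S.π • (a • u + b • w) := by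
        module
      rw [h1, hyu, sub_self]
    obtain ⟨h1, h2⟩ := (LinearIndependent.pair_iff.mp hli) _ _ hkey
    have ha0 : a ≠ 0 := by
      rintro rfl
      rw [mul_zero, sub_zero] at h1
      exact one_ne_zero h1
    have hva := ha.resolve_left ha0
    have hπa : S.π * a = 1 := by linear_combination -h1
    have hv1 : S.v (S.π * a) = 1 + S.v a := by rw [S.hvmul _ _ hπ ha0, S.hvπ]
    rw [hπa, S.v_one] at hv1
    omega
  by_cases hB : ∀ y ∈ Λ, inO S.v (S.Bc y)
  · left
    obtain ⟨x, hxΛ, hxn⟩ := hexists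
    have hbx : inO S.v (S.Bc x) := hB x hxΛ
    have hpa : ¬ inO S.v (S.π * S.Ac x) := fun h => hxn ((S.memL2 x).mpr ⟨h, hbx⟩)
    have hax0 : S.Ac x ≠ 0 := by
      rintro h
      exact hpa (by rw [h, mul_zero]; exact S.inO_zero)
    have hvax : S.v (S.Ac x) = -2 := by
      have h1 : S.v (S.π * S.Ac x) < 0 := by
        rcases lt_or_ge (S.v (S.π * S.Ac x)) 0 with h | h
        · exact h
        · exact absurd (Or.inr h) hpa
      have h2 := (hF2 x hxΛ).1.resolve_left
        (mul_ne_zero hπ (mul_ne_zero hπ hax0))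
      rw [S.hvmul _ _ hπ (mul_ne_zero hπ hax0)] at h2
      rw [S.hvmul _ _ hπ hax0, S.hvπ] at h1 h2
      omega
    have hsne : S.π * (S.π * S.Ac x) ≠ 0 := mul_ne_zero hπ (mul_ne_zero hπ hax0)
    set s := (S.π * (S.π * S.Ac x))⁻¹ with hs
    have hvs : S.v s = 0 := by
      rw [hs, S.v_inv _ hsne, S.hvmul _ _ hπ (mul_ne_zero hπ hax0),
        S.hvmul _ _ hπ hax0, S.hvπ, hvax]
      norm_num
    have hsO : inO S.v s := Or.inr hvs.ge
    set z := s • x with hz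
    have hzΛ : z ∈ Λ := S.span_smul hsO hxΛ
    have hAz : S.Ac z = (S.π * S.π)⁻¹ := by
      rw [hz, S.Ac_smul, hs]
      field_simp
    have hBzO : inO S.v (S.Bc z) := by
      rw [hz, S.Bc_smul]; exact S.inO_mul hsO hbx
    set c := S.Bc z with hc
    have hcσ : inO S.v ((c + S.σ c) * S.π⁻¹) := by
      have h3 := hF3 z hzΛ z hzΛ
      rw [S.herm_c, hAz, ← hc, S.σ_ppinv] at h3
      refine (inO_congr ?_).mp h3
      field_simp
      ring
    have hcπ : inO S.v (c * S.π⁻¹) := S.half hBzO hcσ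
    have hgen : ((S.π * S.π)⁻¹) • S.w₀ ∈ Λ := by
      have hmem : z + (-(c * S.π⁻¹)) • (S.π • S.w₁) ∈ Λ :=
        S.span_add hzΛ (S.span_smul (S.inO_neg hcπ) hpw1Λ)
      have heq : z + (-(c * S.π⁻¹)) • (S.π • S.w₁) = ((S.π * S.π)⁻¹) • S.w₀ := by
        apply S.ext_c
        · simp only [Ac_add, Ac_smul, Ac_w0, Ac_w1, hAz]
          ring
        · simp only [Bc_add, Bc_smul, Bc_w0, Bc_w1, ← hc]
          field_simp
          ring
      rwa [heq] at hmem
    apply Set.Subset.antisymm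
    · intro y hy
      refine (S.memLinf y).mpr ⟨(hF2 y hy).1, ?_⟩
      have h3 := hF3 _ hgen y hy
      rw [S.herm_c, S.Ac_einf, S.Bc_einf] at h3
      have h4 : inO S.v (S.σ (S.Bc y) * S.π⁻¹) := by
        refine (inO_congr ?_).mp h3
        field_simp
        ring
      have h5 := S.inO_sigma h4
      rw [map_mul, S.hinv, S.σ_pinv] at h5
      exact (inO_congr (by ring)).mp (S.inO_neg h5)
    · rintro y ⟨a, b, ha, hb, rfl⟩
      exact S.span_add (S.span_smul ha hgen) (S.span_smul hb hpw1Λ)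
  · push_neg at hB
    obtain ⟨x, hxΛ, hbx⟩ := hB
    right
    have hbx' : S.Bc x ≠ 0 ∧ S.v (S.Bc x) < 0 := by
      unfold inO at hbx
      push_neg at hbx
      exact ⟨hbx.1, hbx.2⟩
    have hπb : inO S.v (S.π * S.Bc x) := (hF2 x hxΛ).2
    have hπbne : S.π * S.Bc x ≠ 0 := mul_ne_zero hπ hbx'.1
    have hvb : S.v (S.Bc x) = -1 := by
      have h := hπb.resolve_left hπbne
      rw [S.hvmul _ _ hπ hbx'.1, S.hvπ] at h
      omega
    set s := (S.π * S.Bc x)⁻¹ with hs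
    have hvs : S.v s = 0 := by
      rw [hs, S.v_inv _ hπbne, S.hvmul _ _ hπ hbx'.1, S.hvπ, hvb]
      norm_num
    have hsO : inO S.v s := Or.inr hvs.ge
    set z := s • x with hz
    have hzΛ : z ∈ Λ := S.span_smul hsO hxΛ
    have hBz : S.Bc z = S.π⁻¹ := by
      rw [hz, S.Bc_smul, hs]
      field_simp
      ring_nf
      exact mul_inv_cancel₀ hbx'.1
    set a' := S.Ac z with ha'
    have hπa' : inO S.v (S.π * (S.π * a')) := (hF2 z hzΛ).1
    have hd : inO S.v (S.σ a' - a') := by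
      have h3 := hF3 z hzΛ z hzΛ
      rw [S.herm_c, hBz, ← ha', S.σ_pinv] at h3
      refine (inO_congr ?_).mp h3
      field_simp
      ring
    set e' := ((S.π * S.π * a') + S.σ (S.π * S.π * a')) * (2 : F)⁻¹ with he'
    have hσ2 : S.σ (2 : F) = 2 := map_ofNat S.σ 2
    have hσe' : S.σ e' = e' := by
      rw [he', map_mul, map_add, S.hinv, map_inv₀, hσ2]
      ring
    have hppa' : inO S.v (S.π * S.π * a') := (inO_congr (by ring)).mp hπa'
    have he'O : inO S.v e' :=
      S.inO_mul (S.inO_add hppa' (S.inO_sigma hppa')) S.inO_two_inv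
    obtain ⟨k, ⟨hkR, hkO⟩, _⟩ := hRrep e' hσe' he'O
    have hσppa' : S.σ (S.π * S.π * a') = S.π * S.π * S.σ a' := by
      rw [map_mul, map_mul, S.hσπ]; ring
    have hk2 : inO S.v (a' - k * (S.π⁻¹ * S.π⁻¹)) := by
      have hsum := S.inO_add hkO (S.inO_mul (S.inO_neg S.inO_two_inv) hd)
      refine (inO_congr ?_).mp hsum
      rw [he', hσppa']
      field_simp [S.h2]
      ring
    refine ⟨k, hkR, ?_⟩
    have hgmem : S.π⁻¹ • ((k * S.π⁻¹) • S.w₀ + S.w₁) ∈ Λ := by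
      have h5 : z + (k * (S.π⁻¹ * S.π⁻¹) - a') • S.w₀ ∈ Λ :=
        S.span_add hzΛ (S.span_smul
          ((inO_congr (by ring)).mp (S.inO_neg hk2)) hw0Λ)
      have heq : z + (k * (S.π⁻¹ * S.π⁻¹) - a') • S.w₀
          = S.π⁻¹ • ((k * S.π⁻¹) • S.w₀ + S.w₁) := by
        apply S.ext_c
        · rw [S.Ac_gk]
          simp only [Ac_add, Ac_smul, Ac_w0, ← ha']
          ring
        · rw [S.Bc_gk]
          simp only [Bc_add, Bc_smul, Bc_w0, hBz]
          ring
      rwa [heq] at h5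
    apply Set.Subset.antisymm
    · intro y hy
      refine (S.memLk k y).mpr ⟨?_, (hF2 y hy).2⟩
      have h3 := hF3 z hzΛ y hy
      rw [S.herm_c, hBz, ← ha'] at h3
      have h4 := S.inO_sigma h3
      rw [map_mul, map_add, map_mul, map_mul, S.hinv, S.hinv, S.hσπ, S.σ_pinv] at h4
      have h5 : inO S.v (S.Ac y - S.π * S.σ a' * S.Bc y) := by
        refine (inO_congr ?_).mp h4
        linear_combination S.Ac y * mul_inv_cancel₀ S.hπ
      have h6 := S.inO_mul (S.inO_add hd hk2) (hF2 y hy).2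
      have h7 := S.inO_add h5 h6
      refine (inO_congr ?_).mp h7
      field_simp
      ring
    · rintro y ⟨a, b, ha, hb, rfl⟩
      exact S.span_add (S.span_smul ha hw0Λ) (S.span_smul hb hgmem)

lemma main (q : ℕ) (R : Finset F)
    (hRfix : ∀ r ∈ R, S.σ r = r) (hRO : ∀ r ∈ R, inO S.v r) (hRcard : R.card = q)
    (hRrep : ∀ x : F, S.σ x = x → inO S.v x →
      ∃! r, r ∈ R ∧ inO S.v ((x - r) / (S.π * S.π)))
    (hΛ₂ : IsVertex2 S.σ S.π S.v S.L2) :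
    (∀ Λ : Set (F × F), AdjV S.σ S.π S.v S.L2 Λ ↔
      (Λ = S.Linf ∨ ∃ k ∈ R, Λ = S.Lk k)) ∧
    {Λ : Set (F × F) | AdjV S.σ S.π S.v S.L2 Λ}.Finite ∧
    Nat.card {Λ : Set (F × F) | AdjV S.σ S.π S.v S.L2 Λ} = q + 1 := by
  have hiff : ∀ Λ : Set (F × F), AdjV S.σ S.π S.v S.L2 Λ ↔
      (Λ = S.Linf ∨ ∃ k ∈ R, Λ = S.Lk k) := by
    intro Λ
    constructor
    · exact S.forward R hRrep
    · rintro (rfl | ⟨k, hkR, rfl⟩)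
      · exact ⟨hΛ₂, S.vertex2_Linf, S.L2_ne_Linf, S.inter_Linf ▸ S.vertex0_M0⟩
      · exact ⟨hΛ₂, S.vertex2_Lk k (hRfix k hkR), S.L2_ne_Lk k,
          S.inter_Lk k (hRO k hkR) ▸ S.vertex0_Mk k (hRfix k hkR)⟩
  have hset : {Λ : Set (F × F) | AdjV S.σ S.π S.v S.L2 Λ}
      = insert S.Linf ((fun k => S.Lk k) '' ↑R) := by
    ext Λ
    rw [Set.mem_setOf_eq, hiff Λ, Set.mem_insert_iff]
    constructor
    · rintro (h | ⟨k, hk, h⟩)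
      · exact Or.inl h
      · exact Or.inr ⟨k, hk, h.symm⟩
    · rintro (h | ⟨k, hk, h⟩)
      · exact Or.inl h
      · exact Or.inr ⟨k, hk, h.symm⟩
  have hfin : ((fun k => S.Lk k) '' ↑R).Finite := R.finite_toSet.image _
  have hnot : S.Linf ∉ (fun k => S.Lk k) '' ↑R := by
    rintro ⟨k, _, heq⟩
    exact S.Linf_ne_Lk k heq.symm
  have hinj : Set.InjOn (fun k => S.Lk k) ↑R := by
    intro k hk k' hk' h
    have hin := S.Lk_eq_imp h
    obtain ⟨r, _, hu⟩ := hRrep k (hRfix k hk) (hRO k hk)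
    have e1 : k = r := hu k ⟨hk, by rw [sub_self, zero_div]; exact S.inO_zero⟩
    have e2 : k' = r := hu k' ⟨hk',
      (inO_congr (by rw [div_eq_mul_inv, mul_inv])).mp hin⟩
    rw [e1, e2]
  refine ⟨hiff, ?_, ?_⟩
  · rw [hset]
    exact hfin.insert _
  · rw [hset, Nat.card_coe_set_eq,
      Set.ncard_insert_of_notMem hnot hfin,
      Set.ncard_image_of_injOn hinj, Set.ncard_coe_finset, hRcard]

end VSetup

theorem statement2
    (σ : F →+* F) (π : F) (v : F → ℤ)
    (hinv : ∀ x, σ (σ x) = x)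
    (hσπ : σ π = -π)
    (hπ : π ≠ 0)
    (h2 : (2 : F) ≠ 0)
    (hvπ : v π = 1)
    (hv2 : v (2 : F) = 0)
    (hvσ : ∀ x, v (σ x) = v x)
    (hvmul : ∀ x y : F, x ≠ 0 → y ≠ 0 → v (x * y) = v x + v y)
    (hvadd : ∀ x y : F, x ≠ 0 → y ≠ 0 → x + y ≠ 0 → min (v x) (v y) ≤ v (x + y))
    (heven : ∀ x : F, σ x = x → x ≠ 0 → Even (v x))
    (q : ℕ) (w₀ w₁ : F × F)
    (hind : LinearIndependent F ![w₀, w₁])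
    (h00 : herm σ w₀ w₀ = 0) (h11 : herm σ w₁ w₁ = 0) (h01 : herm σ w₀ w₁ = 1)
    (hΛ₂ : IsVertex2 σ π v (spanL v (π⁻¹ • w₀) w₁))
    (R : Finset F)
    (hRfix : ∀ r ∈ R, σ r = r) (hRO : ∀ r ∈ R, inO v r) (hRcard : R.card = q)
    (hRrep : ∀ x : F, σ x = x → inO v x →
      ∃! r, r ∈ R ∧ inO v ((x - r) / (π * π))) :
    (∀ Λ : Set (F × F), AdjV σ π v (spanL v (π⁻¹ • w₀) w₁) Λ ↔
      (Λ = spanL v ((π ^ (-2 : ℤ)) • w₀) (π • w₁) ∨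
        ∃ k ∈ R, Λ = spanL v w₀ (π⁻¹ • ((k * π⁻¹) • w₀ + w₁)))) ∧
    {Λ : Set (F × F) | AdjV σ π v (spanL v (π⁻¹ • w₀) w₁) Λ}.Finite ∧
    Nat.card {Λ : Set (F × F) | AdjV σ π v (spanL v (π⁻¹ • w₀) w₁) Λ} = q + 1 := by
  have hgen : (π : F) ^ (-2 : ℤ) = (π * π)⁻¹ := by rw [zpow_neg, zpow_two]
  rw [hgen]
  exact VSetup.main
    ⟨σ, π, v, w₀, w₁, hinv, hσπ, hπ, h2, hvπ, hv2, hvσ, hvmul, hvadd, heven, hind, h00, h11, h01⟩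
    q R hRfix hRO hRcard hRrep hΛ₂
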